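/- Let X be a finite type with Fintype.card X = m and let σ : Equiv.Perm X. For each i, let N_i(σ) be the number of i-element subsets s of X with s.image σ = s, and for k ≥ 1 let j_k(σ) be the number of k-cycles of σ (with j_1(σ) the number of fixed points). Then in the polynomial ring Polynomial ℤ: ∑_{i=0}^{m} (N_i(σ) : ℤ) • X^i = ∏_{k=1}^{m} (1 + X^k)^{j_k(σ)}. -/

import Mathlib

/-!
A finset is `σ`-invariant iff it is a union of classes of `σ.SameCycle`, so invariant sets
correspond to sets of classes and `∑ₛ X ^ #s = ∏_O (1 + X ^ #O)` over the classes `O`.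
The classes with at least two elements are the supports of the cycle factors of `σ` and the
others are the fixed points, so the class sizes form the multiset `σ.partition.parts`, in which
`k ≥ 1` occurs exactly `j k` times.
-/

open Finset

theorem Finset.sum_card_filter_card_eq_smul_pow {α R : Type*} [Fintype α] [Semiring R]
    (p : Finset α → Prop) [DecidablePred p] (t : R) :
    ∑ i ∈ range (Fintype.card α + 1), #{s | #s = i ∧ p s} • t ^ i = ∑ s with p s, t ^ #s := by
  rw [← sum_fiberwise_of_maps_to (g := card) (t := range (Fintype.card α + 1))
    fun s _ => mem_range.2 (Nat.lt_succ_of_le (card_le_univ s))]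
  refine sum_congr rfl fun i _ => ?_
  rw [sum_congr rfl fun s hs => by rw [(mem_filter.1 hs).2], sum_const, filter_filter]
  simp_rw [and_comm]

theorem Finset.sum_pow_card_filter_mem_eq_prod {X Q R : Type*} [Fintype X] [Fintype Q]
    [DecidableEq Q] [CommSemiring R] (f : X → Q) (t : R) :
    ∑ T : Finset Q, t ^ #{x | f x ∈ T} = ∏ q, (1 + t ^ #{x | f x = q}) := by
  rw [prod_one_add, powerset_univ]
  refine sum_congr rfl fun T _ => ?_
  rw [prod_pow_eq_pow_sum,
    card_eq_sum_card_fiberwise (f := f) (t := T) fun x hx => by simpa using hx]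
  refine congrArg _ (sum_congr rfl fun q hq => ?_)
  rw [filter_filter]
  refine congrArg card (filter_congr fun x _ => and_iff_right_of_imp ?_)
  rintro rfl
  exact hq

theorem Nat.Partition.prod_map_parts {n : ℕ} (p : n.Partition) {M : Type*} [CommMonoid M]
    (g : ℕ → M) : (p.parts.map g).prod = ∏ k ∈ Icc 1 n, g k ^ p.parts.count k := by
  rw [prod_multiset_map_count]
  refine prod_subset (fun k hk => ?_) fun k _ hk => ?_
  · rw [Multiset.mem_toFinset] at hk
    exact mem_Icc.2 ⟨p.parts_pos hk, p.le_of_mem_parts hk⟩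
  · rw [Multiset.count_eq_zero.2 (by simpa using hk), pow_zero]

namespace Equiv.Perm

variable {X : Type*} {σ : Perm X} {x y : X}

local notation "⟦" x "⟧_" σ => Quotient.mk (SameCycle.setoid σ) x

theorem mk_eq_mk_iff_sameCycle : (⟦x⟧_σ) = (⟦y⟧_σ) ↔ σ.SameCycle x y := Quotient.eq

variable [DecidableEq X]

theorem image_eq_self_iff {s : Finset X} : s.image σ = s ↔ ∀ x ∈ s, σ x ∈ s :=
  ⟨fun hs _ hx => hs ▸ mem_image_of_mem σ hx, fun hs =>
    eq_of_subset_of_card_le (image_subset_iff.2 hs) (card_image_of_injective s σ.injective).ge⟩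

variable [Fintype X]

theorem SameCycle.mem_of_mapsTo {s : Set X} (hs : Set.MapsTo σ s s) (h : σ.SameCycle x y)
    (hx : x ∈ s) : y ∈ s := by
  obtain ⟨n, -, -, rfl⟩ := h.exists_pow_eq σ
  rw [coe_pow]
  exact hs.iterate n hx

theorem count_one_parts_partition : σ.partition.parts.count 1 = Fintype.card X - #σ.support := by
  rw [parts_partition, Multiset.count_add, Multiset.count_replicate_self,
    Multiset.count_eq_zero.2 fun h => (one_lt_of_mem_cycleType h).false, zero_add]

theorem count_parts_partition_of_two_le {k : ℕ} (hk : 2 ≤ k) :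
    σ.partition.parts.count k = σ.cycleType.count k := by
  rw [parts_partition, Multiset.count_add, Multiset.count_replicate, if_neg (by omega), add_zero]

instance (σ : Perm X) : DecidableRel (SameCycle.setoid σ) :=
  inferInstanceAs (DecidableRel σ.SameCycle)

theorem card_filter_mk_eq_mk_of_apply_eq (hx : σ x = x) : #{y | (⟦y⟧_σ) = ⟦x⟧_σ} = 1 := by
  rw [card_eq_one]
  refine ⟨x, eq_singleton_iff_unique_mem.2 ⟨by simp, fun y hy => ?_⟩⟩
  exact ((mk_eq_mk_iff_sameCycle.1 (mem_filter.1 hy).2).symm.eq_of_left hx).symm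

theorem card_filter_mk_eq_mk_of_mem_support (hx : x ∈ σ.support) :
    #{y | (⟦y⟧_σ) = ⟦x⟧_σ} = #(σ.cycleOf x).support := by
  congr 1
  ext y
  simp only [mem_filter, mem_univ, true_and, mk_eq_mk_iff_sameCycle, mem_support_cycleOf_iff, hx,
    and_true]
  exact sameCycle_comm

theorem card_filter_mk_eq_mk_eq_one_iff : #{y | (⟦y⟧_σ) = ⟦x⟧_σ} = 1 ↔ x ∉ σ.support := by
  refine ⟨fun h hx => ?_, fun hx => card_filter_mk_eq_mk_of_apply_eq (notMem_support.1 hx)⟩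
  rw [card_filter_mk_eq_mk_of_mem_support hx] at h
  have := two_le_card_support_cycleOf_iff.2 (mem_support.1 hx)
  omega

theorem card_filter_card_filter_mk_eq_one :
    #{q : Quotient (SameCycle.setoid σ) | #{y | (⟦y⟧_σ) = q} = 1}
      = Fintype.card X - #σ.support := by
  rw [← card_compl]
  refine (card_nbij (fun x => ⟦x⟧_σ) (fun x hx => ?_) (fun x hx y _ h => ?_)
    fun q hq => ?_).symm
  · simpa [card_filter_mk_eq_mk_eq_one_iff] using hx
  · exact (mk_eq_mk_iff_sameCycle.1 h).eq_of_left (notMem_support.1 (mem_compl.1 hx))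
  · induction q using Quotient.inductionOn with
    | h x => exact ⟨x, by simpa [card_filter_mk_eq_mk_eq_one_iff] using hq, rfl⟩

theorem prod_filter_card_filter_mk_ne_one {M : Type*} [CommMonoid M] (g : ℕ → M) :
    ∏ q : Quotient (SameCycle.setoid σ) with ¬#{x | (⟦x⟧_σ) = q} = 1,
        g #{x | (⟦x⟧_σ) = q} = ∏ c ∈ σ.cycleFactorsFinset, g #c.support := by
  have mem_nontrivial (x : X) :
      (⟦x⟧_σ) ∈ ({q | ¬#{y | (⟦y⟧_σ) = q} = 1} : Finset _) ↔ x ∈ σ.support := by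
    simp [card_filter_mk_eq_mk_eq_one_iff]
  refine prod_bij (fun q _ => q.lift σ.cycleOf fun _ _ => SameCycle.cycleOf_eq)
    (fun q hq => ?_) (fun q hq q' hq' h => ?_) (fun c hc => ?_) fun q hq => ?_
  · obtain ⟨x, rfl⟩ := q.exists_rep
    exact cycleOf_mem_cycleFactorsFinset_iff.2 ((mem_nontrivial x).1 hq)
  · obtain ⟨x, rfl⟩ := q.exists_rep
    obtain ⟨y, rfl⟩ := q'.exists_rep
    exact Quotient.sound ((sameCycle_iff_cycleOf_eq_of_mem_support ((mem_nontrivial x).1 hq)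
      ((mem_nontrivial y).1 hq')).2 h)
  · obtain ⟨x, hx⟩ := (mem_cycleFactorsFinset_iff.1 hc).1.nonempty_support
    exact ⟨⟦x⟧_σ, (mem_nontrivial x).2 (mem_cycleFactorsFinset_support_le hc hx),
      (cycle_is_cycleOf hx hc).symm⟩
  · obtain ⟨x, rfl⟩ := q.exists_rep
    exact congrArg g (card_filter_mk_eq_mk_of_mem_support ((mem_nontrivial x).1 hq))

theorem prod_quotient_sameCycle {M : Type*} [CommMonoid M] (g : ℕ → M) :
    ∏ q : Quotient (SameCycle.setoid σ), g #{x | (⟦x⟧_σ) = q}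
      = (σ.partition.parts.map g).prod := by
  have prod_fixed :
      ∏ q : Quotient (SameCycle.setoid σ) with #{x | (⟦x⟧_σ) = q} = 1, g #{x | (⟦x⟧_σ) = q}
        = g 1 ^ (Fintype.card X - #σ.support) := by
    rw [← card_filter_card_filter_mk_eq_one, ← prod_const]
    exact prod_congr rfl fun q hq => congrArg g (mem_filter.1 hq).2
  rw [← prod_filter_not_mul_prod_filter univ fun q => #{x | (⟦x⟧_σ) = q} = 1,
    prod_filter_card_filter_mk_ne_one, prod_fixed, parts_partition, Multiset.map_add,
    Multiset.prod_add, Multiset.map_replicate, Multiset.prod_replicate, cycleType_def,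
    Multiset.map_map, prod_map_val]
  rfl

theorem sum_filter_image_eq_self {M : Type*} [AddCommMonoid M] (F : Finset X → M) :
    ∑ s with s.image σ = s, F s
      = ∑ T : Finset (Quotient (SameCycle.setoid σ)), F {x | (⟦x⟧_σ) ∈ T} := by
  have hinj : Function.Injective fun T : Finset (Quotient (SameCycle.setoid σ)) =>
      ({x | (⟦x⟧_σ) ∈ T} : Finset X) := by
    intro T T' h
    ext q
    induction q using Quotient.inductionOn with
    | h x => simpa using congrArg (x ∈ ·) h
  have himage : ({s | s.image σ = s} : Finset (Finset X))
      = univ.image fun T : Finset (Quotient (SameCycle.setoid σ)) =>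
          ({x | (⟦x⟧_σ) ∈ T} : Finset X) := by
    ext s
    simp only [mem_filter, mem_univ, true_and, mem_image, image_eq_self_iff]
    refine ⟨fun hs => ⟨s.image fun x => ⟦x⟧_σ, ?_⟩, ?_⟩
    · ext x
      simp only [mem_filter, mem_univ, true_and, mem_image, mk_eq_mk_iff_sameCycle]
      exact ⟨fun ⟨y, hy, hyx⟩ => hyx.mem_of_mapsTo (fun z hz => hs z hz) hy,
        fun hx => ⟨x, hx, .refl _ _⟩⟩
    · rintro ⟨T, rfl⟩ x hx
      simpa [mk_eq_mk_iff_sameCycle.2 (sameCycle_apply_left.2 (.refl σ x))] using hx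
  rw [himage, sum_image hinj.injOn]

end Equiv.Perm

/-- second Lemma in the proof of Theorem 3.  For a permutation `σ` of an
`m`-element set `X`, with `N i` the number of `i`-element subsets `s` of `X` satisfying
`s.image σ = s` and `j k` the number of `k`-cycles of `σ` (fixed points counting as
`1`-cycles), in `Polynomial ℤ` we have
`∑_{i=0}^{m} N_i • X^i = ∏_{k=1}^{m} (1 + X^k)^{j_k}`. -/
theorem stmt_6 (X : Type*) [Fintype X] [DecidableEq X] (m : ℕ) (hm : Fintype.card X = m)
    (σ : Equiv.Perm X) (j N : ℕ → ℕ)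
    (hj1 : j 1 = m - σ.support.card)
    (hjk : ∀ k, 2 ≤ k → j k = Multiset.count k σ.cycleType)
    (hN : ∀ i, N i =
      (Finset.univ.filter fun s : Finset X => s.card = i ∧ s.image σ = s).card) :
    ∑ i ∈ Finset.range (m + 1), (N i : ℤ) • (Polynomial.X : Polynomial ℤ) ^ i =
      ∏ k ∈ Finset.Icc 1 m, (1 + (Polynomial.X : Polynomial ℤ) ^ k) ^ j k := by
  subst hm
  simp_rw [hN, natCast_zsmul]
  rw [sum_card_filter_card_eq_smul_pow, σ.sum_filter_image_eq_self,
    sum_pow_card_filter_mem_eq_prod, σ.prod_quotient_sameCycle fun k => 1 + Polynomial.X ^ k,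
    Nat.Partition.prod_map_parts]
  refine prod_congr rfl fun k hk => ?_
  obtain rfl | hk := (mem_Icc.1 hk).1.eq_or_lt
  · rw [Equiv.Perm.count_one_parts_partition, hj1]
  · rw [Equiv.Perm.count_parts_partition_of_two_le hk, hjk k hk]
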